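/- Feature hashing concentration via Chebyshev: for x, y ∈ R^n and the global feature hashing estimator into memory of size m, P(|\widehat{⟨x,y⟩}_{G,m} − ⟨x,y⟩| ≥ t) ≤ (1/(m t²)) (Σ_{i≠j} x_i² y_j² + Σ_{i≠j} x_i y_i x_j y_j) for all t > 0. -/

import Mathlib

/-!
With `ε i = ±1` the signs, the error of the estimator is
`∑_{i ≠ k, h i = h k} ε i ε k x i y k`. Averaging its square over the signs kills every product
`ε i ε k ε a ε b` with `{a, b} ≠ {i, k}`, since flipping a sign occurring only once reverses the
sum; and two distinct coordinates collide under `h` with probability exactly `1 / m`. Hence the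
mean square error is `(1 / m) ∑_{i ≠ k} x i y k (x i y k + x k y i)`, and Chebyshev's inequality
on the finite uniform probability space gives the bound.
-/

open Finset

/-- The global feature hashing estimator of the inner product of `x` and `y`. -/
def gEst (n m : ℕ) (h : Fin n → Fin m) (s : Fin n → Bool) (x y : Fin n → ℝ) : ℝ :=
  ∑ j : Fin m,
    (∑ i : Fin n, if h i = j then (if s i then (1:ℝ) else -1) * x i else 0) *
    (∑ i : Fin n, if h i = j then (if s i then (1:ℝ) else -1) * y i else 0)

theorem card_filter_le_abs_mul_sq_le_sum_sq {α : Type*} [Fintype α] (f : α → ℝ) {t : ℝ}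
    (ht : 0 ≤ t) : (#{p | t ≤ |f p|} : ℝ) * t ^ 2 ≤ ∑ p, f p ^ 2 :=
  calc (#{p | t ≤ |f p|} : ℝ) * t ^ 2 = ∑ p ∈ {p | t ≤ |f p|}, t ^ 2 := by
        rw [sum_const, nsmul_eq_mul]
    _ ≤ ∑ p ∈ {p | t ≤ |f p|}, f p ^ 2 := sum_le_sum fun p hp => by
        simpa only [sq_abs] using pow_le_pow_left₀ ht (mem_filter.1 hp).2 2
    _ ≤ ∑ p, f p ^ 2 := sum_le_sum_of_subset_of_nonneg (subset_univ _) fun _ _ _ => sq_nonneg _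

theorem card_filter_apply_eq_apply_mul_card {ι β : Type*} [Fintype ι] [DecidableEq ι]
    [Fintype β] [DecidableEq β] {i k : ι} (hik : i ≠ k) :
    #{h : ι → β | h i = h k} * Fintype.card β = Fintype.card β ^ Fintype.card ι := by
  let e : {h : ι → β // h i = h k} × β ≃ (ι → β) :=
    { toFun := fun p => Function.update p.1.1 k p.2
      invFun := fun h => (⟨Function.update h k (h i), by simp [hik]⟩, h k)
      left_inv := by
        rintro ⟨⟨h, hh⟩, v⟩
        simp [Function.update_of_ne hik, ← hh]
      right_inv := fun h => by simp }
  rw [← Fintype.card_subtype, ← Fintype.card_prod, Fintype.card_congr e, Fintype.card_fun]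

def boolSign (b : Bool) : ℝ := if b then 1 else -1

@[simp] lemma boolSign_not (b : Bool) : boolSign (!b) = -boolSign b := by
  cases b <;> simp [boolSign]

@[simp] lemma boolSign_mul_self (b : Bool) : boolSign b * boolSign b = 1 := by
  cases b <;> simp [boolSign]

section Signs

variable {ι : Type*} [Fintype ι] [DecidableEq ι]

theorem sum_boolSign_mul_eq_zero (a : ι) (F : (ι → Bool) → ℝ)
    (hF : ∀ s, F (Function.update s a (!s a)) = F s) : ∑ s, boolSign (s a) * F s = 0 := by
  have hflip : Function.Involutive fun s : ι → Bool => Function.update s a (!s a) := by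
    intro s; simp
  have := (Equiv.sum_comp hflip.toPerm fun s => boolSign (s a) * F s).symm
  simp only [Function.Involutive.coe_toPerm, Function.update_self, boolSign_not, hF, neg_mul,
    sum_neg_distrib] at this
  linarith

theorem sum_boolSign_mul_three_eq_zero {a i k b : ι} (hai : a ≠ i) (hak : a ≠ k) (hab : a ≠ b) :
    ∑ s : ι → Bool, boolSign (s a) * (boolSign (s i) * boolSign (s k) * boolSign (s b)) = 0 :=
  sum_boolSign_mul_eq_zero a _ fun s => by
    simp only [Function.update_of_ne hai.symm, Function.update_of_ne hak.symm,
      Function.update_of_ne hab.symm]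

theorem sum_boolSign_four {i k a b : ι} (hik : i ≠ k) (hab : a ≠ b) :
    ∑ s : ι → Bool, boolSign (s i) * boolSign (s k) * (boolSign (s a) * boolSign (s b)) =
      if a = i ∧ b = k ∨ a = k ∧ b = i then 2 ^ Fintype.card ι else 0 := by
  split_ifs with hpair
  · have hone : ∀ s : ι → Bool,
        boolSign (s i) * boolSign (s k) * (boolSign (s a) * boolSign (s b)) = 1 := by
      rcases hpair with ⟨rfl, rfl⟩ | ⟨rfl, rfl⟩ <;> intro s <;>
        linear_combination (boolSign (s b) * boolSign (s b)) * boolSign_mul_self (s a) +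
          boolSign_mul_self (s b)
    simp [hone]
  · by_cases ha : a ≠ i ∧ a ≠ k
    · rw [← sum_boolSign_mul_three_eq_zero ha.1 ha.2 hab]
      exact sum_congr rfl fun s _ => by ring
    · have hb : b ≠ i ∧ b ≠ k := by grind
      rw [← sum_boolSign_mul_three_eq_zero hb.1 hb.2 hab.symm]
      exact sum_congr rfl fun s _ => by ring

end Signs

section SecondMoment

variable {ι β : Type*} [Fintype ι] [DecidableEq ι] [DecidableEq β]

def signedCollisionTerm (h : ι → β) (s : ι → Bool) (w : ι → ι → ℝ) (p : ι × ι) : ℝ :=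
  if p.1 ≠ p.2 ∧ h p.1 = h p.2 then boolSign (s p.1) * boolSign (s p.2) * w p.1 p.2 else 0

def signedCollisionSum (h : ι → β) (s : ι → Bool) (w : ι → ι → ℝ) : ℝ :=
  ∑ p, signedCollisionTerm h s w p

theorem sum_signedCollisionTerm_mul (h : ι → β) (w : ι → ι → ℝ) (p q : ι × ι) :
    ∑ s, signedCollisionTerm h s w p * signedCollisionTerm h s w q =
      if p.1 ≠ p.2 ∧ h p.1 = h p.2 ∧ q ∈ ({p, p.swap} : Finset (ι × ι)) then
        2 ^ Fintype.card ι * (w p.1 p.2 * w q.1 q.2) else 0 := by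
  obtain ⟨i, k⟩ := p
  obtain ⟨a, b⟩ := q
  by_cases hp : i ≠ k ∧ h i = h k
  · by_cases hq : a ≠ b ∧ h a = h b
    · calc ∑ s, signedCollisionTerm h s w (i, k) * signedCollisionTerm h s w (a, b)
          = (∑ s : ι → Bool, boolSign (s i) * boolSign (s k) * (boolSign (s a) * boolSign (s b)))
            * (w i k * w a b) := by
            rw [sum_mul]
            refine sum_congr rfl fun s _ => ?_
            simp only [signedCollisionTerm, if_pos hp, if_pos hq]
            ring
        _ = _ := by
            rw [sum_boolSign_four hp.1 hq.1]
            simp [hp, Prod.ext_iff, mul_comm]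
    · have hzero : ∀ s, signedCollisionTerm h s w (a, b) = 0 := fun s => if_neg hq
      have hq' : (a, b) ∉ ({(i, k), (k, i)} : Finset (ι × ι)) := by grind
      simp [hzero, hq']
  · have hzero : ∀ s, signedCollisionTerm h s w (i, k) = 0 := fun s => if_neg hp
    simp only [hzero, zero_mul, sum_const_zero]
    exact (if_neg fun hc => hp ⟨hc.1, hc.2.1⟩).symm

theorem sum_signedCollisionSum_sq (h : ι → β) (w : ι → ι → ℝ) :
    ∑ s, signedCollisionSum h s w ^ 2 =
      2 ^ Fintype.card ι * ∑ i, ∑ k, if i ≠ k ∧ h i = h k then w i k * (w i k + w k i) else 0 := by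
  calc ∑ s, signedCollisionSum h s w ^ 2
      = ∑ p, ∑ q, ∑ s, signedCollisionTerm h s w p * signedCollisionTerm h s w q := by
        simp only [signedCollisionSum, sq, sum_mul_sum]
        rw [sum_comm]
        exact sum_congr rfl fun _ _ => sum_comm
    _ = ∑ p : ι × ι, 2 ^ Fintype.card ι * if p.1 ≠ p.2 ∧ h p.1 = h p.2 then
          w p.1 p.2 * (w p.1 p.2 + w p.2 p.1) else 0 := by
        refine sum_congr rfl fun p _ => ?_
        simp only [sum_signedCollisionTerm_mul]
        by_cases hp : p.1 ≠ p.2 ∧ h p.1 = h p.2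
        · have hswap : p ≠ p.swap := fun he => hp.1 (congrArg Prod.fst he)
          simp only [hp, ne_eq, not_false_eq_true, true_and, if_true]
          rw [sum_ite_mem, univ_inter, sum_pair hswap]
          simp only [Prod.fst_swap, Prod.snd_swap]
          ring
        · rw [if_neg hp, mul_zero]
          exact sum_eq_zero fun q _ => if_neg fun hc => hp ⟨hc.1, hc.2.1⟩
    _ = _ := by rw [← mul_sum, Fintype.sum_prod_type]

theorem card_mul_sum_signedCollisionSum_sq [Fintype β] (w : ι → ι → ℝ) :
    Fintype.card β * ∑ h : ι → β, ∑ s, signedCollisionSum h s w ^ 2 =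
      Fintype.card β ^ Fintype.card ι * 2 ^ Fintype.card ι *
        ∑ i, ∑ k, if i ≠ k then w i k * (w i k + w k i) else 0 := by
  have hcollide : ∀ i k : ι, (Fintype.card β : ℝ) *
      ∑ h : ι → β, (if i ≠ k ∧ h i = h k then w i k * (w i k + w k i) else 0) =
        Fintype.card β ^ Fintype.card ι * if i ≠ k then w i k * (w i k + w k i) else 0 := by
    intro i k
    by_cases hik : i = k
    · simp [hik]
    · simp only [ne_eq, hik, not_false_eq_true, true_and, if_true]
      rw [← sum_filter, sum_const, nsmul_eq_mul, ← mul_assoc, mul_comm (Fintype.card β : ℝ),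
        ← Nat.cast_mul, card_filter_apply_eq_apply_mul_card hik]
      push_cast
      ring
  have hswap : ∀ f : (ι → β) → ι → ι → ℝ, ∑ h, ∑ i, ∑ k, f h i k = ∑ i, ∑ k, ∑ h, f h i k :=
    fun f => by rw [sum_comm]; exact sum_congr rfl fun _ _ => sum_comm
  simp only [sum_signedCollisionSum_sq, ← mul_sum]
  rw [hswap, mul_left_comm, mul_sum]
  simp only [mul_sum (s := univ (α := ι)), hcollide]
  exact sum_congr rfl fun _ _ => sum_congr rfl fun _ _ => by ring

end SecondMoment

theorem gEst_sub_inner {n m : ℕ} (h : Fin n → Fin m) (s : Fin n → Bool) (x y : Fin n → ℝ) :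
    gEst n m h s x y - ∑ i, x i * y i = signedCollisionSum h s fun i k => x i * y k := by
  have hbucket : gEst n m h s x y =
      ∑ i, ∑ k, if h i = h k then boolSign (s i) * boolSign (s k) * (x i * y k) else 0 := by
    change ∑ j, (∑ i, if h i = j then boolSign (s i) * x i else 0) *
      (∑ k, if h k = j then boolSign (s k) * y k else 0) = _
    simp only [sum_mul_sum]
    rw [sum_comm]
    refine sum_congr rfl fun i _ => ?_
    rw [sum_comm]
    refine sum_congr rfl fun k _ => ?_
    simp [mul_mul_mul_comm]
  have hdiag : ∀ i k, (if h i = h k then boolSign (s i) * boolSign (s k) * (x i * y k) else 0) =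
      (if i ≠ k ∧ h i = h k then boolSign (s i) * boolSign (s k) * (x i * y k) else 0) +
        if i = k then x i * y i else 0 := by
    intro i k
    by_cases hik : i = k
    · subst hik; simp
    · simp [hik]
  simp only [hbucket, hdiag, sum_add_distrib, sum_ite_eq, mem_univ, if_true, signedCollisionSum,
    signedCollisionTerm, Fintype.sum_prod_type]
  ring

theorem card_mul_sum_gEst_sub_inner_sq (n m : ℕ) (x y : Fin n → ℝ) :
    (m : ℝ) * ∑ p : (Fin n → Fin m) × (Fin n → Bool), (gEst n m p.1 p.2 x y - ∑ i, x i * y i) ^ 2 =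
      m ^ n * 2 ^ n *
        ((∑ i : Fin n, ∑ j : Fin n, if i ≠ j then x i ^ 2 * y j ^ 2 else 0)
          + ∑ i : Fin n, ∑ j : Fin n, if i ≠ j then x i * y i * (x j * y j) else 0) := by
  have hsecond := card_mul_sum_signedCollisionSum_sq (β := Fin m) fun i k => x i * y k
  simp only [Fintype.card_fin] at hsecond
  simp only [gEst_sub_inner, Fintype.sum_prod_type, hsecond, ← sum_add_distrib]
  congr 1
  refine sum_congr rfl fun i _ => sum_congr rfl fun k _ => ?_
  split_ifs <;> ring

/-- Feature hashing concentration via Chebyshev: the probability (over uniformly random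
hash and independent signs) that the estimator deviates from `⟨x,y⟩` by at least `t`
is at most `(1/(m t²)) (Σ_{i≠j} x_i² y_j² + Σ_{i≠j} x_i y_i x_j y_j)`. -/
theorem featureHashing_chebyshev (n m : ℕ) (hm : 0 < m) (x y : Fin n → ℝ)
    (t : ℝ) (ht : 0 < t) :
    ((Finset.univ.filter
        (fun p : (Fin n → Fin m) × (Fin n → Bool) =>
          t ≤ |gEst n m p.1 p.2 x y - ∑ i : Fin n, x i * y i|)).card : ℝ)
      / ((m : ℝ) ^ n * 2 ^ n)
    ≤ (1 / ((m : ℝ) * t ^ 2)) *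
        ((∑ i : Fin n, ∑ j : Fin n, if i ≠ j then x i ^ 2 * y j ^ 2 else 0)
          + ∑ i : Fin n, ∑ j : Fin n, if i ≠ j then x i * y i * (x j * y j) else 0) := by
  set err := fun p : (Fin n → Fin m) × (Fin n → Bool) => gEst n m p.1 p.2 x y - ∑ i, x i * y i
  have hcheb := card_filter_le_abs_mul_sq_le_sum_sq err ht.le
  have hm' : (0 : ℝ) < m := by exact_mod_cast hm
  rw [div_le_iff₀ (by positivity)]
  calc (#{p | t ≤ |err p|} : ℝ) = #{p | t ≤ |err p|} * t ^ 2 * m / (m * t ^ 2) := by field_simp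
    _ ≤ (∑ p, err p ^ 2) * m / (m * t ^ 2) := by gcongr
    _ = _ := by rw [mul_comm _ (m : ℝ), card_mul_sum_gEst_sub_inner_sq]; ring
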